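/- For every optimal policy π* and every state s in the winning region W: μ^{π*}_s(Safe) = 1. -/

import Mathlib

open MeasureTheory Set
open scoped ENNReal Classical

variable {S : Type*}

def IsPathMeasure [MeasurableSpace S] (P : S → PMF S) (μ : S → Measure (ℕ → S)) : Prop :=
  (∀ s, IsProbabilityMeasure (μ s)) ∧
    ∀ (s : S) (n : ℕ) (x : ℕ → S),
      μ s {ω | ∀ i ≤ n, ω i = x i} =
        (if x 0 = s then 1 else 0) * ∏ i ∈ Finset.range n, (P (x i)) (x (i + 1))

noncomputable def Rw (Acc : Set S) (γacc rn : ℝ) (s : S) : ℝ :=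
  if s ∈ Acc then (1 - γacc) * rn else 0

noncomputable def Γw (Acc : Set S) (γacc γ : ℝ) (s : S) : ℝ :=
  if s ∈ Acc then γacc else γ

noncomputable def Ret (Acc : Set S) (γacc γ rn : ℝ) (ω : ℕ → S) : ℝ :=
  ∑' t : ℕ, Rw Acc γacc rn (ω (t + 1)) * ∏ k ∈ Finset.range t, Γw Acc γacc γ (ω (k + 1))

noncomputable def Val [MeasurableSpace S] (Acc : Set S) (γacc γ rn : ℝ)
    (μ : S → Measure (ℕ → S)) (s : S) : ℝ :=
  ∫ ω, Ret Acc γacc γ rn ω ∂ (μ s)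

variable {A : S → Type*}

noncomputable def Valp [MeasurableSpace S] (Acc : Set S) (γacc γ rn : ℝ)
    (μ : ((s : S) → A s) → S → Measure (ℕ → S)) (π : (s : S) → A s) (s : S) : ℝ :=
  ∫ ω, Ret Acc γacc γ rn ω ∂ (μ π s)

noncomputable def Qp [MeasurableSpace S] [Fintype S]
    (P : (s : S) → A s → PMF S) (Acc : Set S) (γacc γ rn : ℝ)
    (μ : ((s : S) → A s) → S → Measure (ℕ → S)) (π : (s : S) → A s) (s : S) (a : A s) : ℝ :=
  ∑ s' : S, (P s a s').toReal *
    (Rw Acc γacc rn s' + Γw Acc γacc γ s' * Valp Acc γacc γ rn μ π s')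

noncomputable def Qstar [MeasurableSpace S] [Fintype S]
    (P : (s : S) → A s → PMF S) (Acc : Set S) (γacc γ rn : ℝ)
    (μ : ((s : S) → A s) → S → Measure (ℕ → S)) (s : S) (a : A s) : ℝ :=
  ⨆ π : (s' : S) → A s', Qp P Acc γacc γ rn μ π s a

def WinRegion [MeasurableSpace S] (Acc : Set S)
    (μ : ((s : S) → A s) → S → Measure (ℕ → S)) : Set S :=
  {s | ∃ π : (s' : S) → A s', μ π s {ω | ∀ t, ω t ∉ Acc} = 1}

def IsOptimal [MeasurableSpace S] (Acc : Set S) (γacc γ rn : ℝ)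
    (μ : ((s : S) → A s) → S → Measure (ℕ → S)) (πo : (s : S) → A s) : Prop :=
  ∀ s, Valp Acc γacc γ rn μ πo s = ⨆ π : (s' : S) → A s', Valp Acc γacc γ rn μ π s

/-!
The return is nonpositive and vanishes exactly on the paths that never enter `Acc` after time `0`.
A policy winning from `s` thus has value `0` at `s`, the largest possible value, so an optimal
policy has value `0` at `s` too; the integral of a nonpositive function vanishes only if the
function vanishes almost surely, so the optimal policy also avoids `Acc` almost surely.
-/

section Return

variable {Acc : Set S} {γacc γ rn : ℝ}

lemma abs_Rw_le (s : S) : |Rw Acc γacc rn s| ≤ |(1 - γacc) * rn| := by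
  unfold Rw; split_ifs
  · exact le_rfl
  · simp only [abs_zero]; positivity

lemma Rw_nonpos (hrn : rn ≤ 0) (hγacc : γacc ≤ 1) (s : S) : Rw Acc γacc rn s ≤ 0 := by
  unfold Rw; split_ifs
  · exact mul_nonpos_of_nonneg_of_nonpos (sub_nonneg.2 hγacc) hrn
  · rfl

lemma Rw_neg_of_mem (hrn : rn < 0) (hγacc : γacc < 1) {s : S} (hs : s ∈ Acc) :
    Rw Acc γacc rn s < 0 := by
  rw [Rw, if_pos hs]
  exact mul_neg_of_pos_of_neg (sub_pos.2 hγacc) hrn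

lemma Rw_of_notMem {s : S} (hs : s ∉ Acc) : Rw Acc γacc rn s = 0 := if_neg hs

lemma abs_Γw_le (s : S) : |Γw Acc γacc γ s| ≤ max |γ| |γacc| := by
  unfold Γw; split_ifs <;> simp

lemma Γw_pos (hγ : 0 < γ) (hγacc : 0 < γacc) (s : S) : 0 < Γw Acc γacc γ s := by
  unfold Γw; split_ifs <;> assumption

noncomputable def retTerm (Acc : Set S) (γacc γ rn : ℝ) (ω : ℕ → S) (t : ℕ) : ℝ :=
  Rw Acc γacc rn (ω (t + 1)) * ∏ k ∈ Finset.range t, Γw Acc γacc γ (ω (k + 1))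

lemma abs_retTerm_le (ω : ℕ → S) (t : ℕ) :
    |retTerm Acc γacc γ rn ω t| ≤ |(1 - γacc) * rn| * max |γ| |γacc| ^ t := by
  rw [retTerm, abs_mul, Finset.abs_prod]
  refine mul_le_mul (abs_Rw_le _) ?_ (by positivity) (abs_nonneg _)
  calc ∏ k ∈ Finset.range t, |Γw Acc γacc γ (ω (k + 1))|
      ≤ ∏ _k ∈ Finset.range t, max |γ| |γacc| :=
        Finset.prod_le_prod (fun _ _ => abs_nonneg _) fun k _ => abs_Γw_le _
    _ = max |γ| |γacc| ^ t := by rw [Finset.prod_const, Finset.card_range]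

lemma summable_retTerm (hγ : |γ| < 1) (hγacc : |γacc| < 1) (ω : ℕ → S) :
    Summable (retTerm Acc γacc γ rn ω) :=
  .of_norm_bounded ((summable_geometric_of_lt_one (by positivity) (max_lt hγ hγacc)).mul_left _)
    (abs_retTerm_le ω)

lemma retTerm_nonpos (hrn : rn ≤ 0) (hγ : 0 < γ) (hγacc : 0 < γacc) (hγacc₁ : γacc ≤ 1)
    (ω : ℕ → S) (t : ℕ) : retTerm Acc γacc γ rn ω t ≤ 0 :=
  mul_nonpos_of_nonpos_of_nonneg (Rw_nonpos hrn hγacc₁ _)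
    (Finset.prod_nonneg fun _ _ => (Γw_pos hγ hγacc _).le)

lemma Ret_nonpos (hrn : rn ≤ 0) (hγ : 0 < γ) (hγacc : 0 < γacc) (hγacc₁ : γacc ≤ 1)
    (ω : ℕ → S) : Ret Acc γacc γ rn ω ≤ 0 :=
  tsum_nonpos (retTerm_nonpos hrn hγ hγacc hγacc₁ ω)

lemma Ret_eq_zero_iff (hrn : rn < 0) (hγ : 0 < γ ∧ γ < 1) (hγacc : 0 < γacc ∧ γacc < 1)
    (ω : ℕ → S) : Ret Acc γacc γ rn ω = 0 ↔ ∀ t, ω (t + 1) ∉ Acc := by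
  constructor
  · intro hRet t ht
    have hterm : retTerm Acc γacc γ rn ω t < 0 :=
      mul_neg_of_neg_of_pos (Rw_neg_of_mem hrn hγacc.2 ht)
        (Finset.prod_pos fun _ _ => Γw_pos hγ.1 hγacc.1 _)
    have := Summable.tsum_lt_tsum (retTerm_nonpos hrn.le hγ.1 hγacc.1 hγacc.2.le ω) hterm
      (summable_retTerm (abs_lt.2 ⟨by linarith, hγ.2⟩) (abs_lt.2 ⟨by linarith, hγacc.2⟩) ω)
      summable_zero
    rw [tsum_zero] at this
    exact this.ne hRet
  · intro hsafe
    simp [Ret, Rw_of_notMem (hsafe _)]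

lemma measurable_Ret [MeasurableSpace S] (hAcc : MeasurableSet Acc) :
    Measurable (Ret Acc γacc γ rn) := by
  have hRw : Measurable (Rw Acc γacc rn) := Measurable.ite hAcc measurable_const measurable_const
  have hΓw : Measurable (Γw Acc γacc γ) := Measurable.ite hAcc measurable_const measurable_const
  exact Measurable.tsum fun t => (hRw.comp (measurable_pi_apply _)).mul
    (Finset.measurable_prod _ fun k _ => hΓw.comp (measurable_pi_apply _))

lemma abs_Ret_le (hγ : |γ| < 1) (hγacc : |γacc| < 1) (ω : ℕ → S) :
    |Ret Acc γacc γ rn ω| ≤ |(1 - γacc) * rn| * (1 - max |γ| |γacc|)⁻¹ :=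
  tsum_of_norm_bounded (f := retTerm Acc γacc γ rn ω)
    ((hasSum_geometric_of_lt_one (by positivity) (max_lt hγ hγacc)).mul_left _) (abs_retTerm_le ω)

lemma integrable_Ret [MeasurableSpace S] {ν : Measure (ℕ → S)} [IsFiniteMeasure ν]
    (hAcc : MeasurableSet Acc) (hγ : |γ| < 1) (hγacc : |γacc| < 1) :
    Integrable (Ret Acc γacc γ rn) ν :=
  (integrable_const _).mono' (measurable_Ret hAcc).aestronglyMeasurable
    (ae_of_all _ (abs_Ret_le hγ hγacc))

lemma integral_Ret_eq_zero_iff [MeasurableSpace S] {ν : Measure (ℕ → S)} [IsFiniteMeasure ν]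
    (hAcc : MeasurableSet Acc) (hrn : rn < 0) (hγ : 0 < γ ∧ γ < 1)
    (hγacc : 0 < γacc ∧ γacc < 1) :
    ∫ ω, Ret Acc γacc γ rn ω ∂ν = 0 ↔ ∀ᵐ ω ∂ν, ∀ t, ω (t + 1) ∉ Acc := by
  have hnonneg : 0 ≤ fun ω => -Ret Acc γacc γ rn ω :=
    fun ω => neg_nonneg.2 (Ret_nonpos hrn.le hγ.1 hγacc.1 hγacc.2.le ω)
  have hint : Integrable (Ret Acc γacc γ rn) ν :=
    integrable_Ret hAcc (abs_lt.2 ⟨by linarith, hγ.2⟩) (abs_lt.2 ⟨by linarith, hγacc.2⟩)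
  rw [← neg_eq_zero, ← integral_neg, integral_eq_zero_iff_of_nonneg hnonneg hint.neg]
  refine Filter.eventually_congr (ae_of_all _ fun ω => ?_)
  simp [Ret_eq_zero_iff hrn hγ hγacc]

end Return

section PathMeasure

variable [MeasurableSpace S] [MeasurableSingletonClass S] {P : S → PMF S}
  {μ : S → Measure (ℕ → S)}

lemma IsPathMeasure.ae_start (hμ : IsPathMeasure P μ) (s : S) : ∀ᵐ ω ∂μ s, ω 0 = s := by
  have := hμ.1 s
  exact (ae_iff_prob_eq_one ((measurable_pi_apply 0).eq_const s)).2
    (by simpa using hμ.2 s 0 fun _ => s)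

lemma IsPathMeasure.prob_safe_eq_one_iff (hμ : IsPathMeasure P μ) {Acc : Set S}
    (hAcc : MeasurableSet Acc) (s : S) :
    μ s {ω | ∀ t, ω t ∉ Acc} = 1 ↔ s ∉ Acc ∧ ∀ᵐ ω ∂μ s, ∀ t, ω (t + 1) ∉ Acc := by
  have := hμ.1 s
  have hsafe : Measurable fun ω : ℕ → S => ∀ t, ω t ∉ Acc :=
    .forall fun t => (hAcc.mem.comp (measurable_pi_apply t)).not
  rw [← ae_iff_prob_eq_one hsafe]
  constructor
  · intro h
    obtain ⟨ω, hω, hω0⟩ := (h.and (hμ.ae_start s)).exists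
    exact ⟨hω0 ▸ hω 0, h.mono fun ω hω t => hω (t + 1)⟩
  · rintro ⟨hs, h⟩
    filter_upwards [h, hμ.ae_start s] with ω hω hω0
    rintro (_ | t)
    exacts [hω0 ▸ hs, hω t]

end PathMeasure

theorem optimal_policy_safe_on_winning_region_general
    [Fintype S] [MeasurableSpace S] [MeasurableSingletonClass S]
    (P : (s : S) → A s → PMF S) (Acc : Set S)
    (μ : ((s : S) → A s) → S → Measure (ℕ → S))
    (hμ : ∀ π : (s : S) → A s, IsPathMeasure (fun s => P s (π s)) (μ π))
    (rn γ γacc : ℝ) (hrn : rn < 0) (hγ : 0 < γ ∧ γ < 1) (hγacc : 0 < γacc ∧ γacc < 1)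
    (πo : (s : S) → A s) (hopt : IsOptimal Acc γacc γ rn μ πo) :
    ∀ s ∈ WinRegion Acc μ, μ πo s {ω | ∀ t, ω t ∉ Acc} = 1 := by
  rintro s ⟨π, hπ⟩
  have hAcc : MeasurableSet Acc := Acc.toFinite.measurableSet
  have := (hμ π).1 s
  have := (hμ πo).1 s
  have hValp_nonpos (π' : (s : S) → A s) : Valp Acc γacc γ rn μ π' s ≤ 0 :=
    integral_nonpos fun ω => Ret_nonpos hrn.le hγ.1 hγacc.1 hγacc.2.le ω
  obtain ⟨hs, hπ_safe⟩ := ((hμ π).prob_safe_eq_one_iff hAcc s).1 hπ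
  have hValp_π : Valp Acc γacc γ rn μ π s = 0 :=
    (integral_Ret_eq_zero_iff hAcc hrn hγ hγacc).2 hπ_safe
  have hValp_πo : Valp Acc γacc γ rn μ πo s = 0 := by
    refine le_antisymm (hValp_nonpos πo) ?_
    rw [hopt s, ← hValp_π]
    exact le_ciSup ⟨0, Set.forall_mem_range.2 hValp_nonpos⟩ π
  exact ((hμ πo).prob_safe_eq_one_iff hAcc s).2
    ⟨hs, (integral_Ret_eq_zero_iff hAcc hrn hγ hγacc).1 hValp_πo⟩

/-- every optimal policy is almost surely safe from every state of the
winning region. -/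
theorem optimal_policy_safe_on_winning_region
    [Fintype S] [Nonempty S] [MeasurableSpace S] [MeasurableSingletonClass S]
    [∀ s, Fintype (A s)] [∀ s, Nonempty (A s)]
    (P : (s : S) → A s → PMF S) (Acc : Set S)
    (habs : ∀ s ∈ Acc, ∀ a : A s, (P s a).support ⊆ Acc)
    (μ : ((s : S) → A s) → S → Measure (ℕ → S))
    (hμ : ∀ π : (s : S) → A s, IsPathMeasure (fun s => P s (π s)) (μ π))
    (rn γ γacc : ℝ) (hrn : rn < 0) (hγ : 0 < γ ∧ γ < 1) (hγacc : 0 < γacc ∧ γacc < 1)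
    (πo : (s : S) → A s) (hopt : IsOptimal Acc γacc γ rn μ πo) :
    ∀ s ∈ WinRegion Acc μ, μ πo s {ω | ∀ t, ω t ∉ Acc} = 1 :=
  optimal_policy_safe_on_winning_region_general P Acc μ hμ rn γ γacc hrn hγ hγacc πo hopt
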